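/- Let m, n ∈ ℕ with 2 ≤ m ≤ n. For every m⊗n state ρ, the negativity satisfies N(ρ) ≤ 1; equivalently, ‖ρ^Γ‖₁ ≤ 2m − 1. -/

import Mathlib

open Matrix BigOperators Polynomial
open scoped Kronecker ComplexOrder

noncomputable section

/-- Squared Hilbert–Schmidt norm `‖C‖² = Tr(CᴴC)`. -/
def hsNormSq {d : Type*} [Fintype d] (C : Matrix d d ℂ) : ℝ :=
  (Matrix.trace (Cᴴ * C)).re

/-- The matrix square root `Matrix.PosSemidef.sqrt` of the older Mathlib (removed since),
restored verbatim with its old definition. -/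
def Matrix.PosSemidef.sqrt {n 𝕜 : Type*} [Fintype n] [DecidableEq n] [RCLike 𝕜]
    {A : Matrix n n 𝕜} (hA : A.PosSemidef) : Matrix n n 𝕜 :=
  hA.1.eigenvectorUnitary.1 * diagonal ((↑) ∘ (√·) ∘ hA.1.eigenvalues) *
  (star hA.1.eigenvectorUnitary : Matrix n n 𝕜)

/-- Trace norm `‖X‖₁ = Tr √(XᴴX)`. -/
def traceNorm {d : Type*} [Fintype d] [DecidableEq d] (X : Matrix d d ℂ) : ℝ :=
  ((Matrix.posSemidef_conjTranspose_mul_self X).sqrt.trace).re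

/-- Partial transpose on the first factor: `ρ^Γ((i,k),(j,l)) = ρ((j,k),(i,l))`. -/
def ptranspose {m n : ℕ} (ρ : Matrix (Fin m × Fin n) (Fin m × Fin n) ℂ) :
    Matrix (Fin m × Fin n) (Fin m × Fin n) ℂ :=
  Matrix.of fun p q => ρ (q.1, p.2) (p.1, q.2)

/-- Negativity `N(ρ) = (‖ρ^Γ‖₁ - 1)/(m-1)`. -/
def negativity {m n : ℕ} (ρ : Matrix (Fin m × Fin n) (Fin m × Fin n) ℂ) : ℝ :=
  (traceNorm (ptranspose ρ) - 1) / ((m : ℝ) - 1)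

/-- `ψ` is an orthonormal basis of `ℂ^m` (an orthonormal family of `m` vectors). -/
def IsONB {m : ℕ} (ψ : Fin m → (Fin m → ℂ)) : Prop :=
  ∀ k l, (∑ i, star (ψ k i) * ψ l i) = if k = l then 1 else 0

/-- The rank-one projector `|v⟩⟨v|`. -/
def proj {m : ℕ} (v : Fin m → ℂ) : Matrix (Fin m) (Fin m) ℂ :=
  Matrix.vecMulVec v (fun j => star (v j))

/-- The von Neumann measurement map
`Π^A(ρ) = ∑ k, (|ψ_k⟩⟨ψ_k| ⊗ I_n) ρ (|ψ_k⟩⟨ψ_k| ⊗ I_n)`. -/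
def piA {m n : ℕ} (ψ : Fin m → (Fin m → ℂ))
    (ρ : Matrix (Fin m × Fin n) (Fin m × Fin n) ℂ) :
    Matrix (Fin m × Fin n) (Fin m × Fin n) ℂ :=
  ∑ k, (proj (ψ k) ⊗ₖ (1 : Matrix (Fin n) (Fin n) ℂ)) * ρ *
       (proj (ψ k) ⊗ₖ (1 : Matrix (Fin n) (Fin n) ℂ))

/-- Geometric discord
`D(ρ) = (m/(m-1)) · inf over von Neumann measurements of ‖ρ - Π^A(ρ)‖²`. -/
def gd {m n : ℕ} (ρ : Matrix (Fin m × Fin n) (Fin m × Fin n) ℂ) : ℝ :=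
  ((m : ℝ) / ((m : ℝ) - 1)) *
    ⨅ ψ : {ψ : Fin m → (Fin m → ℂ) // IsONB ψ}, hsNormSq (ρ - piA ψ.1 ρ)

/-- An `m ⊗ n` state: positive semidefinite with trace one. -/
def IsState {m n : ℕ} (ρ : Matrix (Fin m × Fin n) (Fin m × Fin n) ℂ) : Prop :=
  ρ.PosSemidef ∧ ρ.trace = 1

/-- Reindex a `6 × 6` matrix by `Fin 2 × Fin 3` with the ordering
`(1,1),(1,2),(1,3),(2,1),(2,2),(2,3)`. -/
def ofM6 (M : Matrix (Fin 6) (Fin 6) ℂ) :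
    Matrix (Fin 2 × Fin 3) (Fin 2 × Fin 3) ℂ :=
  Matrix.of fun p q =>
    M ⟨p.1.val * 3 + p.2.val, by have := p.1.isLt; have := p.2.isLt; omega⟩
      ⟨q.1.val * 3 + q.2.val, by have := q.1.isLt; have := q.2.isLt; omega⟩

/-- The family of states `ρ₁(a,b)`. -/
def rho1 (a b : ℝ) : Matrix (Fin 2 × Fin 3) (Fin 2 × Fin 3) ℂ :=
  ofM6 ((1 / (2 * ((a : ℂ)^2 + (b : ℂ)^2))) •
    !![(a:ℂ)^2, 0, 0, 0, (a:ℂ)*(b:ℂ), 0;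
       0, (b:ℂ)^2, 0, 0, 0, (a:ℂ)*(b:ℂ);
       0, 0, 0, 0, 0, 0;
       0, 0, 0, 0, 0, 0;
       (a:ℂ)*(b:ℂ), 0, 0, 0, (b:ℂ)^2, 0;
       0, (a:ℂ)*(b:ℂ), 0, 0, 0, (a:ℂ)^2])

/-!
For Hermitian `X`, `‖X‖₁ = Tr (S X)` with `S` the (unitary) sign of `X`. Moving the partial
transpose across the trace, `‖ρ^Γ‖₁ = Tr (S^Γ ρ)`, and the partial transpose of any unitary has
numerical radius at most `m`: splitting `x` into its `m` blocks `xᵢ`, each block of the quadratic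
form is bounded by `‖xᵢ‖ ‖xⱼ‖` via Cauchy–Schwarz. Hence `‖ρ^Γ‖₁ ≤ m Tr ρ = m ≤ 2m - 1`, and
`N(ρ) ≤ (m - 1)/(m - 1) = 1`.
-/

section QuadraticForm

variable {ι : Type*} [Fintype ι]

lemma re_star_dotProduct_self (x : ι → ℂ) : (star x ⬝ᵥ x).re = ∑ i, ‖x i‖ ^ 2 := by
  simp only [dotProduct, Complex.re_sum, Pi.star_apply, Complex.star_def, Complex.mul_re,
    Complex.conj_re, Complex.conj_im, Complex.sq_norm, Complex.normSq_apply]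
  exact Finset.sum_congr rfl fun _ _ => by ring

lemma norm_star_dotProduct_le (a b : ι → ℂ) :
    ‖star a ⬝ᵥ b‖ ≤ √(∑ i, ‖a i‖ ^ 2) * √(∑ i, ‖b i‖ ^ 2) :=
  calc ‖star a ⬝ᵥ b‖ ≤ ∑ i, ‖star (a i) * b i‖ := norm_sum_le _ _
    _ = ∑ i, ‖a i‖ * ‖b i‖ := by simp only [norm_mul, norm_star]
    _ ≤ _ := Real.sum_mul_le_sqrt_mul_sqrt _ _ _

lemma sum_norm_sq_mulVec_of_isometry [DecidableEq ι] {S : Matrix ι ι ℂ} (hS : Sᴴ * S = 1)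
    (v : ι → ℂ) : ∑ i, ‖(S *ᵥ v) i‖ ^ 2 = ∑ i, ‖v i‖ ^ 2 := by
  rw [← re_star_dotProduct_self, ← re_star_dotProduct_self, star_mulVec, dotProduct_mulVec,
    vecMul_vecMul, hS, vecMul_one]

lemma norm_star_dotProduct_mulVec_le_of_isometry [DecidableEq ι] {S : Matrix ι ι ℂ}
    (hS : Sᴴ * S = 1) (a b : ι → ℂ) :
    ‖star a ⬝ᵥ (S *ᵥ b)‖ ≤ √(∑ i, ‖a i‖ ^ 2) * √(∑ i, ‖b i‖ ^ 2) := by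
  simpa only [sum_norm_sq_mulVec_of_isometry hS] using norm_star_dotProduct_le a (S *ᵥ b)

/-- Decompose `ρ = ∑ vᵢ vᵢᴴ` into rank-one terms. -/
lemma norm_trace_mul_le_of_quadForm_le {M ρ : Matrix ι ι ℂ} (hρ : ρ.PosSemidef) {c : ℝ}
    (hM : ∀ x : ι → ℂ, ‖star x ⬝ᵥ (M *ᵥ x)‖ ≤ c * (star x ⬝ᵥ x).re) :
    ‖(M * ρ).trace‖ ≤ c * ρ.trace.re := by
  obtain ⟨r, v, rfl⟩ := Matrix.posSemidef_iff_eq_sum_vecMulVec.mp hρ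
  have hrank_one (x : ι → ℂ) : (M * vecMulVec x (star x)).trace = star x ⬝ᵥ (M *ᵥ x) := by
    rw [mul_vecMulVec, trace_vecMulVec, dotProduct_comm]
  simp only [Finset.mul_sum, trace_sum, hrank_one, trace_vecMulVec, dotProduct_comm _ (star _),
    Complex.re_sum]
  exact (norm_sum_le _ _).trans (Finset.sum_le_sum fun i _ => hM (v i))

end QuadraticForm

section PartialTranspose

variable {m n : ℕ}

lemma ptranspose_isHermitian {ρ : Matrix (Fin m × Fin n) (Fin m × Fin n) ℂ}
    (hρ : ρ.IsHermitian) : (ptranspose ρ).IsHermitian := by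
  ext p q
  exact congrFun (congrFun hρ (q.1, p.2)) (p.1, q.2)

lemma trace_mul_ptranspose (S ρ : Matrix (Fin m × Fin n) (Fin m × Fin n) ℂ) :
    (S * ptranspose ρ).trace = (ptranspose S * ρ).trace := by
  simp only [Matrix.trace, Matrix.diag, Matrix.mul_apply, ptranspose, Matrix.of_apply,
    Fintype.sum_prod_type]
  rw [Finset.sum_comm_cycle]
  exact Finset.sum_congr rfl fun _ _ => Finset.sum_comm

/-- `|j⟩ ⊗ w`. -/
def blockVec (j : Fin m) (w : Fin n → ℂ) : Fin m × Fin n → ℂ :=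
  fun p => if p.1 = j then w p.2 else 0

lemma sum_norm_sq_blockVec (j : Fin m) (w : Fin n → ℂ) :
    ∑ p, ‖blockVec j w p‖ ^ 2 = ∑ k, ‖w k‖ ^ 2 := by
  simp [blockVec, Fintype.sum_prod_type, apply_ite (‖·‖ ^ 2)]

lemma star_blockVec_dotProduct_mulVec_blockVec (S : Matrix (Fin m × Fin n) (Fin m × Fin n) ℂ)
    (i j : Fin m) (u v : Fin n → ℂ) :
    star (blockVec j u) ⬝ᵥ (S *ᵥ blockVec i v) =
      ∑ k, ∑ l, star (u k) * (S (j, k) (i, l) * v l) := by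
  simp [blockVec, dotProduct, mulVec, Fintype.sum_prod_type, apply_ite star, Finset.mul_sum]

lemma star_dotProduct_ptranspose_mulVec (S : Matrix (Fin m × Fin n) (Fin m × Fin n) ℂ)
    (x : Fin m × Fin n → ℂ) :
    star x ⬝ᵥ (ptranspose S *ᵥ x) =
      ∑ i, ∑ j, star (blockVec j fun k => x (i, k)) ⬝ᵥ (S *ᵥ blockVec i fun l => x (j, l)) := by
  simp_rw [star_blockVec_dotProduct_mulVec_blockVec]
  simp only [dotProduct, mulVec, ptranspose, Matrix.of_apply, Fintype.sum_prod_type,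
    Pi.star_apply, Finset.mul_sum]
  exact Finset.sum_congr rfl fun _ _ => Finset.sum_comm

/-- Summing the Cauchy–Schwarz bounds `‖xᵢ‖ ‖xⱼ‖` of the `m²` block pairings costs
`(∑ᵢ ‖xᵢ‖)² ≤ m ∑ᵢ ‖xᵢ‖²`. -/
lemma norm_star_dotProduct_ptranspose_mulVec_le {S : Matrix (Fin m × Fin n) (Fin m × Fin n) ℂ}
    (hS : Sᴴ * S = 1) (x : Fin m × Fin n → ℂ) :
    ‖star x ⬝ᵥ (ptranspose S *ᵥ x)‖ ≤ m * (star x ⬝ᵥ x).re := by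
  set A : Fin m → ℝ := fun i => ∑ k, ‖x (i, k)‖ ^ 2
  have hA (i : Fin m) : 0 ≤ A i := Finset.sum_nonneg fun _ _ => sq_nonneg _
  have hblock (i j : Fin m) :
      ‖star (blockVec j fun k => x (i, k)) ⬝ᵥ (S *ᵥ blockVec i fun l => x (j, l))‖ ≤
        √(A i) * √(A j) := by
    simpa only [sum_norm_sq_blockVec] using
      norm_star_dotProduct_mulVec_le_of_isometry hS (blockVec j _) (blockVec i _)
  calc ‖star x ⬝ᵥ (ptranspose S *ᵥ x)‖
      ≤ ∑ i, ∑ j, √(A i) * √(A j) := by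
        rw [star_dotProduct_ptranspose_mulVec]
        refine (norm_sum_le _ _).trans (Finset.sum_le_sum fun i _ => ?_)
        exact (norm_sum_le _ _).trans (Finset.sum_le_sum fun j _ => hblock i j)
    _ = (∑ i, √(A i)) ^ 2 := by rw [sq, Finset.sum_mul_sum]
    _ ≤ m * ∑ i, √(A i) ^ 2 := by
        simpa using sq_sum_le_card_mul_sum_sq (s := Finset.univ) (f := fun i => √(A i))
    _ = m * (star x ⬝ᵥ x).re := by
        simp only [Real.sq_sqrt (hA _), A, re_star_dotProduct_self, Fintype.sum_prod_type]

end PartialTranspose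

section TraceNorm

variable {ι : Type*} [Fintype ι] [DecidableEq ι]

open scoped MatrixOrder in
lemma Matrix.PosSemidef.sqrt_eq_cfcSqrt {A : Matrix ι ι ℂ} (hA : A.PosSemidef) :
    hA.sqrt = CFC.sqrt A := by
  rw [CFC.sqrt_eq_real_sqrt A hA.nonneg, cfcₙ_eq_cfc, hA.1.cfc_eq]
  simp [Matrix.IsHermitian.cfc, Matrix.PosSemidef.sqrt, Unitary.conjStarAlgAut_apply,
    Function.comp_def]

open scoped MatrixOrder in
lemma Matrix.PosSemidef.eq_sqrt_of_sq_eq {A B : Matrix ι ι ℂ} (hA : A.PosSemidef)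
    (hB : B.PosSemidef) (h : B ^ 2 = A) : B = hA.sqrt := by
  rw [hA.sqrt_eq_cfcSqrt]
  exact (CFC.sqrt_unique (by rw [← sq, h]) hB.nonneg).symm

lemma unitary_conj_diagonal_mul {U : Matrix ι ι ℂ} (hU : Uᴴ * U = 1) (a b : ι → ℂ) :
    U * diagonal a * Uᴴ * (U * diagonal b * Uᴴ) = U * diagonal (a * b) * Uᴴ := by
  simp only [Matrix.mul_assoc, ← Matrix.mul_assoc Uᴴ U, hU, Matrix.one_mul,
    ← Matrix.mul_assoc (diagonal a), diagonal_mul_diagonal]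
  rfl

/-- With `X = U diag(λ) Uᴴ`, the sign matrix `S = U diag(sign λ) Uᴴ` is a Hermitian unitary with
`S X = |X| = √(XᴴX)`. -/
lemma Matrix.IsHermitian.exists_traceNorm_eq {X : Matrix ι ι ℂ} (hX : X.IsHermitian) :
    ∃ S : Matrix ι ι ℂ, Sᴴ * S = 1 ∧ traceNorm X = (S * X).trace.re := by
  set U : Matrix ι ι ℂ := (hX.eigenvectorUnitary : Matrix ι ι ℂ)
  have hU : Uᴴ * U = 1 := Unitary.star_mul_self_of_mem hX.eigenvectorUnitary.2
  have hU' : U * Uᴴ = 1 := Unitary.mul_star_self_of_mem hX.eigenvectorUnitary.2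
  set s : ι → ℂ := fun i => if 0 ≤ hX.eigenvalues i then 1 else -1
  set absX : Matrix ι ι ℂ := U * diagonal (fun i => ((|hX.eigenvalues i| : ℝ) : ℂ)) * Uᴴ
  have hX_eq : X = U * diagonal (fun i => ((hX.eigenvalues i : ℝ) : ℂ)) * Uᴴ :=
    hX.spectral_theorem
  have hss : s * s = 1 := funext fun i => by by_cases h : 0 ≤ hX.eigenvalues i <;> simp [s, h]
  have hS : (U * diagonal s * Uᴴ)ᴴ = U * diagonal s * Uᴴ := by
    have : star s = s := funext fun i => by by_cases h : 0 ≤ hX.eigenvalues i <;> simp [s, h]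
    simp only [conjTranspose_mul, conjTranspose_conjTranspose, diagonal_conjTranspose, this,
      Matrix.mul_assoc]
  have hSX : U * diagonal s * Uᴴ * X = absX := by
    rw [hX_eq, unitary_conj_diagonal_mul hU]
    refine congrArg (fun d => U * diagonal d * Uᴴ) (funext fun i => ?_)
    by_cases h : 0 ≤ hX.eigenvalues i
    · simp [s, h, abs_of_nonneg h]
    · simp [s, h, abs_of_neg (not_le.mp h)]
  have habsX_psd : absX.PosSemidef :=
    (posSemidef_diagonal_iff.mpr fun i => by simp).mul_mul_conjTranspose_same U
  have habsX_sq : absX ^ 2 = Xᴴ * X := by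
    rw [sq, hX.eq, hX_eq, unitary_conj_diagonal_mul hU, unitary_conj_diagonal_mul hU]
    refine congrArg (fun d => U * diagonal d * Uᴴ) (funext fun i => ?_)
    simp only [Pi.mul_apply, ← Complex.ofReal_mul, abs_mul_abs_self]
  refine ⟨U * diagonal s * Uᴴ, ?_, ?_⟩
  · rw [hS, unitary_conj_diagonal_mul hU, hss, Pi.one_def, diagonal_one, Matrix.mul_one, hU']
  · rw [traceNorm, ← (posSemidef_conjTranspose_mul_self X).eq_sqrt_of_sq_eq habsX_psd habsX_sq,
      hSX]

end TraceNorm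

lemma traceNorm_ptranspose_le {m n : ℕ} {ρ : Matrix (Fin m × Fin n) (Fin m × Fin n) ℂ}
    (hρ : ρ.PosSemidef) : traceNorm (ptranspose ρ) ≤ m * ρ.trace.re := by
  obtain ⟨S, hS, hnorm⟩ := (ptranspose_isHermitian hρ.1).exists_traceNorm_eq
  calc traceNorm (ptranspose ρ) = (ptranspose S * ρ).trace.re := by
        rw [hnorm, trace_mul_ptranspose]
    _ ≤ ‖(ptranspose S * ρ).trace‖ := Complex.re_le_norm _
    _ ≤ m * ρ.trace.re :=
        norm_trace_mul_le_of_quadForm_le hρ (norm_star_dotProduct_ptranspose_mulVec_le hS)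

theorem stmt5_general (m n : ℕ) (hm : 2 ≤ m)
    (ρ : Matrix (Fin m × Fin n) (Fin m × Fin n) ℂ) (hρ : IsState ρ) :
    negativity ρ ≤ 1 ∧ traceNorm (ptranspose ρ) ≤ 2 * (m : ℝ) - 1 := by
  obtain ⟨hpsd, htr⟩ := hρ
  have hbound : traceNorm (ptranspose ρ) ≤ m := by
    simpa [htr] using traceNorm_ptranspose_le hpsd
  have hm' : (2 : ℝ) ≤ m := by exact_mod_cast hm
  refine ⟨?_, by linarith⟩
  rw [negativity, div_le_one (by linarith)]
  linarith

theorem stmt5 (m n : ℕ) (hm : 2 ≤ m) (hmn : m ≤ n)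
    (ρ : Matrix (Fin m × Fin n) (Fin m × Fin n) ℂ) (hρ : IsState ρ) :
    negativity ρ ≤ 1 ∧ traceNorm (ptranspose ρ) ≤ 2 * (m : ℝ) - 1 :=
  stmt5_general m n hm ρ hρ

end
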